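/- The probability that F_k belongs to the random set A(p) satisfies the recurrence Prob(F_k ∈ A(p)) = p² · Prob(F_{k-2} ∈ A(p)) + p - p² for k ≥ 3, with Prob(F_1 ∈ A(p)) = p and Prob(F_2 ∈ A(p)) = p - p². -/

import Mathlib

/-!
`F_{k+2}` is in `A(p)` exactly when `F_{k+1}` is not and the fresh coin of step `k+2` shows
heads. That coin is independent of the earlier ones, so `P(k+2) = p (1 - P(k+1))`; applying
this twice gives `P(k+2) = p - p² + p² P(k)`.
-/

open Finset

noncomputable section

def Fib (n : ℕ) : ℕ := Nat.fib (n + 1)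

/-- `included c k` : whether `F_{k+1}` is included in the random Zeckendorf process,
given coins `c` (`c k` is the coin for step `k+1`): a Fibonacci number is included
with probability `p` when the previous one was not included, and is excluded otherwise. -/
def included (c : ℕ → Bool) : ℕ → Bool
  | 0 => c 0
  | k + 1 => !included c k && c (k + 1)

/-- Extend a finite coin sequence by `false`. -/
def ext (n : ℕ) (c : Fin n → Bool) : ℕ → Bool :=
  fun j => if h : j < n then c ⟨j, h⟩ else false

/-- Probability weight of a finite coin sequence, each coin heads with probability `p`. -/
def wt (p : ℝ) {n : ℕ} (c : Fin n → Bool) : ℝ :=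
  ∏ i, if c i then p else 1 - p

open Classical in
/-- Probability of an event depending on the first `n` coins. -/
def finProb (p : ℝ) (n : ℕ) (E : (ℕ → Bool) → Prop) : ℝ :=
  ∑ c : Fin n → Bool, if E (ext n c) then wt p c else 0

/-- `Prob (F_k ∈ A(p))` for `k ≥ 1`. -/
def probIncl (p : ℝ) (k : ℕ) : ℝ :=
  finProb p k (fun c => included c (k - 1) = true)

/-- Expected value of a function of the first `n` coins. -/
def expVal (p : ℝ) (n : ℕ) (f : (ℕ → Bool) → ℝ) : ℝ :=
  ∑ c : Fin n → Bool, wt p c * f (ext n c)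

/-- `W_n` : the number of selected indices among `1,...,n`. -/
def countIn (n : ℕ) (c : ℕ → Bool) : ℕ :=
  ((Icc 1 n).filter (fun j => included c (j - 1) = true)).card

lemma included_congr {c c' : ℕ → Bool} : ∀ k, (∀ j ≤ k, c j = c' j) →
    included c k = included c' k
  | 0, h => by simp [included, h 0 le_rfl]
  | k + 1, h => by
    simp only [included, included_congr k fun j hj => h j (hj.trans k.le_succ), h (k + 1) le_rfl]

lemma ext_snoc_of_lt {n : ℕ} (c : Fin n → Bool) (b : Bool) {j : ℕ} (hj : j < n) :
    ext (n + 1) (Fin.snoc c b) j = ext n c j := by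
  simp only [_root_.ext, dif_pos hj, dif_pos (hj.trans n.lt_succ_self)]
  exact Fin.snoc_castSucc (α := fun _ => Bool) (p := c) (x := b) (i := ⟨j, hj⟩)

lemma ext_snoc_last {n : ℕ} (c : Fin n → Bool) (b : Bool) :
    ext (n + 1) (Fin.snoc c b) n = b := by
  simp only [_root_.ext, dif_pos n.lt_succ_self]
  exact Fin.snoc_last (α := fun _ => Bool) (p := c) (x := b)

lemma wt_snoc (p : ℝ) {n : ℕ} (c : Fin n → Bool) (b : Bool) :
    wt p (Fin.snoc c b) = wt p c * (if b then p else 1 - p) := by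
  simp only [wt, Fin.prod_univ_castSucc, Fin.snoc_castSucc, Fin.snoc_last]

lemma Fintype.sum_fun_succ_eq_sum_snoc {M α : Type*} [AddCommMonoid M] [Fintype α] (n : ℕ)
    (f : (Fin (n + 1) → α) → M) : ∑ c, f c = ∑ c : Fin n → α, ∑ a, f (Fin.snoc c a) := by
  rw [← (Fin.snocEquiv fun _ => α).sum_comp, Fintype.sum_prod_type, Finset.sum_comm]
  rfl

lemma sum_wt_eq_one (p : ℝ) (n : ℕ) : ∑ c : Fin n → Bool, wt p c = 1 := by
  induction n with
  | zero => simp [wt]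
  | succ n ih =>
    simp [Fintype.sum_fun_succ_eq_sum_snoc, wt_snoc, ← mul_add, ih]

lemma finProb_not (p : ℝ) (n : ℕ) (E : (ℕ → Bool) → Prop) :
    finProb p n (fun c => ¬ E c) = 1 - finProb p n E := by
  rw [← sum_wt_eq_one p n, finProb, finProb, ← Finset.sum_sub_distrib]
  refine Finset.sum_congr rfl fun c _ => ?_
  split_ifs <;> simp_all

lemma finProb_and_coin (p : ℝ) (n : ℕ) (E : (ℕ → Bool) → Prop)
    (hE : ∀ c c' : ℕ → Bool, (∀ j < n, c j = c' j) → (E c ↔ E c')) :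
    finProb p (n + 1) (fun c => E c ∧ c n = true) = p * finProb p n E := by
  have hE_snoc (c : Fin n → Bool) (b : Bool) : E (ext (n + 1) (Fin.snoc c b)) ↔ E (ext n c) :=
    hE _ _ fun j hj => ext_snoc_of_lt c b hj
  rw [finProb, Fintype.sum_fun_succ_eq_sum_snoc, finProb, Finset.mul_sum]
  refine Fintype.sum_congr _ _ fun c => ?_
  rw [Fintype.sum_bool, hE_snoc, hE_snoc, ext_snoc_last, ext_snoc_last, wt_snoc, wt_snoc]
  by_cases h : E (ext n c) <;> simp [h, mul_comm]

lemma probIncl_one (p : ℝ) : probIncl p 1 = p := by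
  have h := finProb_and_coin p 0 (fun _ => True) fun _ _ _ => Iff.rfl
  simpa [finProb, sum_wt_eq_one, probIncl, included, wt] using h

lemma probIncl_add_two (p : ℝ) (n : ℕ) :
    probIncl p (n + 2) = p * (1 - probIncl p (n + 1)) := by
  have hevent : (fun c => included c (n + 1) = true)
      = fun c => ¬ included c n = true ∧ c (n + 1) = true := by
    funext c
    simp [included]
  have hdep (c c' : ℕ → Bool) (h : ∀ j < n + 1, c j = c' j) :
      (¬ included c n = true ↔ ¬ included c' n = true) := by
    rw [included_congr n fun j hj => h j (Nat.lt_succ_of_le hj)]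
  rw [probIncl, show n + 2 - 1 = n + 1 from rfl, hevent, finProb_and_coin p (n + 1) _ hdep,
    finProb_not]
  rfl

theorem probIncl_recurrence_general (p : ℝ) :
    probIncl p 1 = p ∧ probIncl p 2 = p - p ^ 2 ∧
    ∀ k : ℕ, 3 ≤ k → probIncl p k = p ^ 2 * probIncl p (k - 2) + p - p ^ 2 := by
  refine ⟨probIncl_one p, ?_, fun k hk => ?_⟩
  · rw [probIncl_add_two p 0, probIncl_one]
    ring
  · obtain ⟨n, rfl⟩ : ∃ n, k = n + 3 := ⟨k - 3, by omega⟩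
    rw [probIncl_add_two p (n + 1), probIncl_add_two p n, show n + 3 - 2 = n + 1 from rfl]
    ring

/-- The probability that `F_k ∈ A(p)` satisfies
`Prob(F_k ∈ A(p)) = p²·Prob(F_{k-2} ∈ A(p)) + p - p²` for `k ≥ 3`, with
`Prob(F_1 ∈ A(p)) = p` and `Prob(F_2 ∈ A(p)) = p - p²`. -/
theorem probIncl_recurrence (p : ℝ) (hp0 : 0 < p) (hp1 : p < 1) :
    probIncl p 1 = p ∧ probIncl p 2 = p - p ^ 2 ∧
    ∀ k : ℕ, 3 ≤ k → probIncl p k = p ^ 2 * probIncl p (k - 2) + p - p ^ 2 :=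
  probIncl_recurrence_general p

end
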